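/- arXiv:2208.10480 — 7 statements merged into one kernel-verified Lean document; each statement's English description precedes it below -/
import Mathlib

section
/- Let A be a finite nonempty alphabet and d ≥ 1. If L is a regular language over A that is Π₁_d[N]-definable, then L is Π₁_d[Reg]-definable. -/
def NumPredEncoding {d : ℕ} (N : (Fin d → ℕ) → ℕ → Prop) :
    Language (Finset (Fin d)) :=
  {u | ∃ p : Fin d → Fin u.length,
    (∀ j : Fin d, ∀ q : Fin u.length, j ∈ u.get q ↔ q = p j) ∧
    N (fun j => (p j : ℕ)) u.length}

def IsRegularNumPred {d : ℕ} (N : (Fin d → ℕ) → ℕ → Prop) : Prop :=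
  (NumPredEncoding N).IsRegular

def Pi1NDefinable (A : Type*) (d : ℕ) (L : Set (List A)) : Prop :=
  ∃ N : (Fin d → A) → (Fin d → ℕ) → ℕ → Prop,
    ∀ w : List A, w ∈ L ↔ ∀ i : Fin d → Fin w.length,
      N (fun j => w.get (i j)) (fun j => (i j : ℕ)) w.length

def Pi1RegDefinable (A : Type*) (d : ℕ) (L : Set (List A)) : Prop :=
  ∃ N : (Fin d → A) → (Fin d → ℕ) → ℕ → Prop,
    (∀ a : Fin d → A, IsRegularNumPred (N a)) ∧
    ∀ w : List A, w ∈ L ↔ ∀ i : Fin d → Fin w.length,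
      N (fun j => w.get (i j)) (fun j => (i j : ℕ)) w.length

/-!
If `L` is regular and defined by some family `N_a`, it is also defined by the canonical family
`witnessPred L a p n`: "some word of `L` of length `n` carries the letter `a j` at position `p j`
for every `j`". A word of `L` witnesses each of its own position tuples; conversely, if the tuple
`i` of `w` is witnessed by `v ∈ L`, then `v` and `w` carry the same letters at `i`, so `N` accepts
`w` at `i` because it accepts `v` there.

The encoding of `witnessPred L a` is regular: it is the language of valid markings (checked by a
DFA recording the marks seen so far) intersected with the image of `L` under the letter relation
"`c` may carry the mark set `s` iff `a j = c` for all `j ∈ s`", which an NFA recognizes by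
guessing the word of `L` letter by letter.
-/

namespace DFA

variable {α β σ : Type*}

def imageNFA (M : DFA α σ) (R : α → β → Prop) : NFA β σ where
  step s b := {t | ∃ a, R a b ∧ t = M.step s a}
  start := {M.start}
  accept := M.accept

theorem mem_evalFrom_imageNFA (M : DFA α σ) (R : α → β → Prop) (S : Set σ) (v : List β)
    (x : σ) :
    x ∈ (M.imageNFA R).evalFrom S v ↔ ∃ s ∈ S, ∃ w, List.Forall₂ R w v ∧ M.evalFrom s w = x := by
  induction v generalizing S with
  | nil => simp [eq_comm]
  | cons b v ih =>
    rw [NFA.evalFrom_cons, ih]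
    simp only [NFA.mem_stepSet, imageNFA, Set.mem_ofPred_eq, List.forall₂_cons_right_iff]
    constructor
    · rintro ⟨_, ⟨s, hs, a, hab, rfl⟩, w, hw, rfl⟩
      exact ⟨s, hs, a :: w, ⟨a, w, hab, hw, rfl⟩, rfl⟩
    · rintro ⟨s, hs, _, ⟨a, w, hab, hw, rfl⟩, rfl⟩
      exact ⟨_, ⟨s, hs, a, hab, rfl⟩, w, hw, rfl⟩

theorem imageNFA_accepts (M : DFA α σ) (R : α → β → Prop) :
    (M.imageNFA R).accepts = {v | ∃ w ∈ M.accepts, List.Forall₂ R w v} := by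
  ext v
  simp only [NFA.mem_accepts, mem_evalFrom_imageNFA, DFA.mem_accepts]
  constructor
  · rintro ⟨_, hacc, _, rfl, w, hw, rfl⟩
    exact ⟨w, hacc, hw⟩
  · rintro ⟨w, hacc, hw⟩
    exact ⟨_, hacc, _, rfl, w, hw, rfl⟩

end DFA

theorem Language.IsRegular.image_forall₂ {α β : Type*} {L : Language α} (hL : L.IsRegular)
    (R : α → β → Prop) : Language.IsRegular ({v | ∃ w ∈ L, List.Forall₂ R w v} : Language β) := by
  obtain ⟨σ, _, M, rfl⟩ := hL
  exact ⟨_, inferInstance, (M.imageNFA R).toDFA, by rw [NFA.toDFA_correct, M.imageNFA_accepts]⟩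

def markingDFA (ι : Type*) [Fintype ι] [DecidableEq ι] : DFA (Finset ι) (Option (Finset ι)) where
  step o s := o.bind fun T => if Disjoint T s then some (T ∪ s) else none
  start := some ∅
  accept := {some Finset.univ}

section marking

variable {ι : Type*} [Fintype ι] [DecidableEq ι]

theorem markingDFA_evalFrom_none (u : List (Finset ι)) : (markingDFA ι).evalFrom none u = none := by
  induction u with
  | nil => rfl
  | cons s u ih => exact ih

theorem markingDFA_evalFrom_some (T : Finset ι) (u : List (Finset ι)) :
    (markingDFA ι).evalFrom (some T) u =
      if (∀ s ∈ u, Disjoint T s) ∧ u.Pairwise Disjoint then some (T ∪ u.foldr (· ∪ ·) ∅)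
      else none := by
  induction u generalizing T with
  | nil => simp
  | cons s u ih =>
    have hstep : (markingDFA ι).step (some T) s = if Disjoint T s then some (T ∪ s) else none :=
      rfl
    rw [DFA.evalFrom_cons, hstep]
    by_cases hTs : Disjoint T s
    · rw [if_pos hTs, ih]
      simp only [List.forall_mem_cons, List.pairwise_cons, List.foldr_cons,
        Finset.disjoint_union_left, Finset.union_assoc, hTs, true_and, forall_and, and_assoc]
    · simp [hTs, markingDFA_evalFrom_none]

theorem mem_markingDFA_accepts (u : List (Finset ι)) :
    u ∈ (markingDFA ι).accepts ↔ u.Pairwise Disjoint ∧ ∀ i, ∃ s ∈ u, i ∈ s := by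
  have mem_union (i : ι) : i ∈ u.foldr (· ∪ ·) ∅ ↔ ∃ s ∈ u, i ∈ s := by
    induction u <;> simp [*]
  change (markingDFA ι).evalFrom (some ∅) u = some Finset.univ ↔ _
  simp [markingDFA_evalFrom_some, Finset.eq_univ_iff_forall, mem_union]

end marking

theorem exists_marking_iff {ι : Type*} (u : List (Finset ι)) :
    (∃ p : ι → Fin u.length, ∀ j q, j ∈ u.get q ↔ q = p j) ↔
      u.Pairwise Disjoint ∧ ∀ j, ∃ s ∈ u, j ∈ s := by
  constructor
  · rintro ⟨p, hp⟩
    refine ⟨List.pairwise_iff_get.2 fun q q' hlt => Finset.disjoint_left.2 fun j hj hj' => ?_,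
      fun j => ⟨u.get (p j), List.get_mem _ _, (hp j _).2 rfl⟩⟩
    exact hlt.ne (((hp j q).1 hj).trans ((hp j q').1 hj').symm)
  · rintro ⟨hdisj, hcover⟩
    have hmarked (j : ι) : ∃ q, j ∈ u.get q := by
      obtain ⟨s, hs, hj⟩ := hcover j
      obtain ⟨q, rfl⟩ := List.mem_iff_get.1 hs
      exact ⟨q, hj⟩
    choose p hp using hmarked
    refine ⟨p, fun j q => ⟨fun hj => ?_, by rintro rfl; exact hp j⟩⟩
    by_contra hne
    rcases lt_or_gt_of_ne hne with hlt | hlt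
    · exact Finset.disjoint_left.1 (List.pairwise_iff_get.1 hdisj _ _ hlt) hj (hp j)
    · exact Finset.disjoint_left.1 (List.pairwise_iff_get.1 hdisj _ _ hlt) (hp j) hj

variable {A : Type*} {d : ℕ}

def witnessPred (L : Language A) (a : Fin d → A) (p : Fin d → ℕ) (n : ℕ) : Prop :=
  ∃ w ∈ L, w.length = n ∧ ∀ j, w[p j]? = some (a j)

theorem forall₂_iff_of_marking {a : Fin d → A} {w : List A} {u : List (Finset (Fin d))}
    {p : Fin d → Fin u.length} (hp : ∀ j q, j ∈ u.get q ↔ q = p j) :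
    List.Forall₂ (fun c s => ∀ j ∈ s, c = a j) w u ↔
      w.length = u.length ∧ ∀ j, w[(p j : ℕ)]? = some (a j) := by
  rw [List.forall₂_iff_get]
  refine and_congr_right fun hlen => ⟨fun h j => ?_, fun h i hw hu j hj => ?_⟩
  · rw [List.getElem?_eq_getElem (by omega)]
    exact congrArg some (h (p j) _ (p j).isLt j ((hp j _).2 rfl))
  · have hi := h j
    rw [← (hp j _).1 hj] at hi
    simpa [List.getElem?_eq_getElem hw] using hi

theorem numPredEncoding_witnessPred (L : Language A) (a : Fin d → A) :
    NumPredEncoding (witnessPred L a) =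
      (markingDFA (Fin d)).accepts ⊓
        {u | ∃ w ∈ L, List.Forall₂ (fun c s => ∀ j ∈ s, c = a j) w u} := by
  ext u
  constructor
  · rintro ⟨p, hp, w, hw, hlen, ha⟩
    exact ⟨(mem_markingDFA_accepts u).2 ((exists_marking_iff u).1 ⟨p, hp⟩), w, hw,
      (forall₂_iff_of_marking hp).2 ⟨hlen, ha⟩⟩
  · rintro ⟨hu, w, hw, hR⟩
    obtain ⟨p, hp⟩ := (exists_marking_iff u).2 ((mem_markingDFA_accepts u).1 hu)
    exact ⟨p, hp, w, hw, (forall₂_iff_of_marking hp).1 hR⟩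

theorem isRegularNumPred_witnessPred {L : Language A} (hL : L.IsRegular) (a : Fin d → A) :
    IsRegularNumPred (witnessPred L a) := by
  rw [IsRegularNumPred, numPredEncoding_witnessPred]
  exact Language.IsRegular.inf ⟨_, inferInstance, markingDFA (Fin d), rfl⟩ (hL.image_forall₂ _)

theorem mem_iff_forall_witnessPred {L : Set (List A)} (h : Pi1NDefinable A d L) (w : List A) :
    w ∈ L ↔ ∀ i : Fin d → Fin w.length,
      witnessPred L (fun j => w.get (i j)) (fun j => i j) w.length := by
  constructor
  · intro hw i
    exact ⟨w, hw, rfl, fun j => by simp⟩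
  · intro hall
    obtain ⟨N, hN⟩ := h
    rw [hN w]
    intro i
    obtain ⟨v, hv, hlen, hva⟩ := hall i
    have hNv := (hN v).1 hv (fun j => Fin.cast hlen.symm (i j))
    have hletters : (fun j => v.get (Fin.cast hlen.symm (i j))) = fun j => w.get (i j) :=
      funext fun j => Option.some_injective _ (by rw [← hva j]; simp)
    rw [hletters] at hNv
    change N _ (fun j => (i j : ℕ)) v.length at hNv
    rwa [hlen] at hNv

theorem pi1_regular_collapse_general (A : Type) (d : ℕ)
    (L : Set (List A)) (hreg : Language.IsRegular (L : Language A))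
    (h : Pi1NDefinable A d L) : Pi1RegDefinable A d L :=
  ⟨witnessPred L, isRegularNumPred_witnessPred hreg, mem_iff_forall_witnessPred h⟩

theorem pi1_regular_collapse (A : Type) [Fintype A] [Nonempty A] (d : ℕ) (hd : 1 ≤ d)
    (L : Set (List A)) (hreg : Language.IsRegular (L : Language A))
    (h : Pi1NDefinable A d L) : Pi1RegDefinable A d L :=
  pi1_regular_collapse_general A d L hreg h
end

section
/- Let A be a finite nonempty alphabet and d ≥ 1. If L is a regular language over A whose complement (in List A) is Π₁_d[N]-definable, then the complement of L is Π₁_d[Reg]-definable. (That is, every regular language definable by a Σ₁ sentence with arbitrary numerical predicates is definable by a Σ₁ sentence with regular numerical predicates.) -/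
/-!
A word `w` lies in `Lᶜ` iff every `d`-tuple of its positions, together with the letters there and
the length `|w|`, is realized by some word of `Lᶜ`: if it is realized by `v ∈ Lᶜ`, the `Π₁`
sentence holds in `v` at the same positions, and that instance reads exactly the data it reads
in `w`. So `Lᶜ` is defined by the predicates "some word of `Lᶜ` of length `n` carries `a j` at
position `p j`". The encoding of such a predicate is the intersection of the language of
well-formed encodings (each mark occurs exactly once) with the preimage of `Lᶜ` under the
letterwise relation "every mark in `s` asks for the letter `c`", and both are regular.
-/

theorem List.countP_eq_one_iff {α : Type*} {p : α → Bool} {l : List α} :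
    l.countP p = 1 ↔ ∃ i : Fin l.length, ∀ q : Fin l.length, p (l.get q) ↔ q = i := by
  induction l with
  | nil => simp
  | cons a l ih =>
    change _ ↔ ∃ i : Fin (l.length + 1), ∀ q : Fin (l.length + 1), p ((a :: l).get q) ↔ q = i
    rw [List.countP_cons]
    by_cases ha : p a <;>
      simp [Fin.exists_fin_succ, Fin.forall_fin_succ, ha, ih, List.countP_eq_zero,
        List.mem_iff_get, fun i : Fin l.length => (Fin.succ_ne_zero i).symm]

namespace DFA

variable {α β σ : Type*}

def comapRelNFA (R : β → α → Prop) (M : DFA α σ) : NFA β σ where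
  step q b := {q' | ∃ c, R b c ∧ M.step q c = q'}
  start := {M.start}
  accept := M.accept

theorem mem_evalFrom_comapRelNFA (R : β → α → Prop) (M : DFA α σ) (q q' : σ) (u : List β) :
    q' ∈ (M.comapRelNFA R).evalFrom {q} u ↔ ∃ w, List.Forall₂ R u w ∧ M.evalFrom q w = q' := by
  induction u generalizing q with
  | nil => simp [eq_comm]
  | cons b u ih =>
    rw [NFA.evalFrom_cons, NFA.stepSet_singleton, NFA.mem_evalFrom_iff_exists]
    simp only [List.forall₂_cons_left_iff]
    constructor
    · rintro ⟨_, ⟨c, hc, rfl⟩, h⟩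
      obtain ⟨w, hw, rfl⟩ := (ih _).1 h
      exact ⟨c :: w, ⟨c, w, hc, hw, rfl⟩, rfl⟩
    · rintro ⟨_, ⟨c, w, hc, hw, rfl⟩, rfl⟩
      exact ⟨_, ⟨c, hc, rfl⟩, (ih _).2 ⟨w, hw, rfl⟩⟩

def countPDFA (p : α → Bool) (k : ℕ) : DFA α (Fin (k + 2)) where
  step q a := ⟨min (q + if p a then 1 else 0) (k + 1), by omega⟩
  start := 0
  accept := {q | q.val = k}

theorem val_evalFrom_countPDFA (p : α → Bool) (k : ℕ) (q : Fin (k + 2)) (u : List α) :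
    ((countPDFA p k).evalFrom q u : ℕ) = min (q + u.countP p) (k + 1) := by
  induction u generalizing q with
  | nil => simp only [evalFrom_nil, List.countP_nil, add_zero]; omega
  | cons a u ih =>
    rw [evalFrom_cons, ih, List.countP_cons]
    simp only [countPDFA]
    split_ifs <;> omega

end DFA

namespace Language

variable {α β : Type*}

def comapRel (R : β → α → Prop) (L : Language α) : Language β :=
  {u | ∃ w ∈ L, List.Forall₂ R u w}

theorem IsRegular.comapRel {L : Language α} (R : β → α → Prop) (h : L.IsRegular) :
    (L.comapRel R).IsRegular := by
  classical
  obtain ⟨σ, _, M, rfl⟩ := h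
  refine ⟨Set σ, inferInstance, (M.comapRelNFA R).toDFA, ?_⟩
  ext u
  rw [NFA.toDFA_correct, NFA.mem_accepts]
  change (∃ q ∈ M.accept, q ∈ (M.comapRelNFA R).evalFrom {M.start} u) ↔ _
  simp only [DFA.mem_evalFrom_comapRelNFA]
  constructor
  · rintro ⟨_, hq, w, hw, rfl⟩
    exact ⟨w, hq, hw⟩
  · rintro ⟨w, hw, hu⟩
    exact ⟨_, hw, w, hu, rfl⟩

theorem isRegular_countP_eq (p : α → Bool) (k : ℕ) :
    IsRegular ({u | u.countP p = k} : Language α) := by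
  refine ⟨_, inferInstance, DFA.countPDFA p k, ?_⟩
  ext u
  change ((DFA.countPDFA p k).evalFrom 0 u : ℕ) = k ↔ u.countP p = k
  rw [DFA.val_evalFrom_countPDFA, Fin.val_zero]
  omega

theorem isRegular_top : (⊤ : Language α).IsRegular :=
  ⟨Unit, inferInstance, ⟨fun _ _ => (), (), Set.univ⟩, by ext; exact iff_of_true trivial trivial⟩

theorem isRegular_iInf {ι : Type*} [Finite ι] {L : ι → Language α}
    (h : ∀ i, (L i).IsRegular) : (⨅ i, L i).IsRegular := by
  classical
  have := Fintype.ofFinite ι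
  suffices ∀ s : Finset ι, (⨅ i ∈ s, L i).IsRegular by simpa using this Finset.univ
  intro s
  induction s using Finset.induction_on with
  | empty => simpa using isRegular_top
  | insert i s _ hs => rw [Finset.iInf_insert]; exact (h i).inf hs

end Language

section NumericalPredicates

variable {A : Type*} {d : ℕ}

theorem numPredEncoding_true :
    NumPredEncoding (fun (_ : Fin d → ℕ) (_ : ℕ) => True) =
      ⨅ j : Fin d, {u | u.countP (fun s => j ∈ s) = 1} := by
  ext u
  change _ ↔ u ∈ ⋂ j : Fin d, _
  simp only [NumPredEncoding, and_true, Set.mem_iInter, List.countP_eq_one_iff,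
    decide_eq_true_eq]
  exact (Classical.skolem (p := fun j i => ∀ q, j ∈ u.get q ↔ q = i)).symm

theorem isRegularNumPred_true : IsRegularNumPred (fun (_ : Fin d → ℕ) (_ : ℕ) => True) := by
  rw [IsRegularNumPred, numPredEncoding_true]
  exact Language.isRegular_iInf fun _ => Language.isRegular_countP_eq _ 1

def Language.completionPred (K : Language A) (a : Fin d → A) (p : Fin d → ℕ) (n : ℕ) : Prop :=
  ∃ w ∈ K, w.length = n ∧ ∀ j, w[p j]? = some (a j)

theorem numPredEncoding_completionPred (K : Language A) (a : Fin d → A) :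
    NumPredEncoding (K.completionPred a) =
      NumPredEncoding (fun _ _ => True) ⊓ K.comapRel (fun s c => ∀ j ∈ s, c = a j) := by
  ext u
  change (∃ p : Fin d → Fin u.length, _ ∧ ∃ w ∈ K, w.length = u.length ∧
      ∀ j, w[(p j : ℕ)]? = some (a j)) ↔
    (∃ p : Fin d → Fin u.length, _ ∧ True) ∧ ∃ w ∈ K, List.Forall₂ _ u w
  simp only [and_true, List.forall₂_iff_get]
  constructor
  · rintro ⟨p, hp, w, hw, hlen, hwp⟩
    refine ⟨⟨p, hp⟩, w, hw, hlen.symm, fun q hq hq' j hj => ?_⟩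
    obtain rfl : q = p j := congrArg Fin.val ((hp j ⟨q, hq⟩).1 hj)
    simpa [hq'] using hwp j
  · rintro ⟨⟨p, hp⟩, w, hw, hlen, hR⟩
    refine ⟨p, hp, w, hw, hlen.symm, fun j => ?_⟩
    have hpj : (p j : ℕ) < w.length := hlen ▸ (p j).isLt
    rw [List.getElem?_eq_getElem hpj]
    exact congrArg some (hR (p j) (p j).isLt hpj j ((hp j (p j)).2 rfl))

theorem isRegularNumPred_completionPred {K : Language A} (hK : K.IsRegular) (a : Fin d → A) :
    IsRegularNumPred (K.completionPred a) := by
  rw [IsRegularNumPred, numPredEncoding_completionPred]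
  exact isRegularNumPred_true.inf (hK.comapRel _)

theorem Pi1NDefinable.mem_iff_forall_completionPred {K : Set (List A)} (h : Pi1NDefinable A d K)
    (w : List A) :
    w ∈ K ↔ ∀ i : Fin d → Fin w.length,
      Language.completionPred K (fun j => w.get (i j)) (fun j => i j) w.length := by
  obtain ⟨N, hN⟩ := h
  refine ⟨fun hw i => ⟨w, hw, rfl, fun j => by simp⟩, fun hcompl => (hN w).2 fun i => ?_⟩
  obtain ⟨v, hv, hlen, hv_get⟩ := hcompl i
  have hvN := (hN v).1 hv fun j => Fin.cast hlen.symm (i j)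
  have hvals : (fun j => v.get (Fin.cast hlen.symm (i j))) = fun j => w.get (i j) :=
    funext fun j => by simpa [List.getElem?_eq_getElem, hlen] using hv_get j
  rw [hvals] at hvN
  simpa only [Fin.val_cast, hlen] using hvN

end NumericalPredicates

theorem sigma1_regular_collapse_general (A : Type) (d : ℕ)
    (L : Set (List A)) (hreg : Language.IsRegular (L : Language A))
    (h : Pi1NDefinable A d Lᶜ) : Pi1RegDefinable A d Lᶜ :=
  ⟨Language.completionPred Lᶜ, isRegularNumPred_completionPred hreg.compl,
    h.mem_iff_forall_completionPred⟩

theorem sigma1_regular_collapse (A : Type) [Fintype A] [Nonempty A] (d : ℕ) (hd : 1 ≤ d)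
    (L : Set (List A)) (hreg : Language.IsRegular (L : Language A))
    (h : Pi1NDefinable A d Lᶜ) : Pi1RegDefinable A d Lᶜ :=
  sigma1_regular_collapse_general A d L hreg h
end

section
/- Let A be a finite nonempty alphabet and d ≥ 1. If a language L over A is Π₁_d[N]-definable, then L = ceil_d L. -/
def ceil (A : Type*) (d : ℕ) (L : Set (List A)) : Set (List A) :=
  {w | ∀ i : Fin d → Fin w.length, ∃ v ∈ L, ∃ h : v.length = w.length,
    ∀ j : Fin d, v.get (Fin.cast h.symm (i j)) = w.get (i j)}

theorem pi1_definable_eq_ceil (A : Type) [Fintype A] [Nonempty A] (d : ℕ) (hd : 1 ≤ d)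
    (L : Set (List A)) (h : Pi1NDefinable A d L) : L = ceil A d L := by
  obtain ⟨N, hN⟩ := h
  ext w
  constructor
  · intro hw i
    exact ⟨w, hw, rfl, fun j => rfl⟩
  · intro hw
    rw [hN]
    intro i
    obtain ⟨v, hvL, hlen, hget⟩ := hw i
    have := (hN v).mp hvL (fun j => Fin.cast hlen.symm (i j))
    simp only [Fin.coe_cast, hget] at this
    rw [hlen] at this
    exact this
end

section
/- Let A be a finite nonempty alphabet, d ≥ 1, and L a regular language over A. Then the Π₁-ceiling ceil_d L is Π₁_d[Reg]-definable. -/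
/-!
Fix letters `a : Fin d → A`. The predicate "some `v ∈ L` of length `n` carries the letter `a j` at
position `i j` for every `j`" has as encoding the words over `Finset (Fin d)` that encode a tuple
and are the letter-by-letter image of a word of `L` under the relation "`b = a j` for every `j`
in the letter". Such images of regular languages are regular (guess the preimage word
nondeterministically), and so are the tuple encodings, so these predicates are regular; by
definition of the ceiling they Π₁-define `ceil A d L`.
-/

section RelImage

variable {α β σ : Type*}

def Language.relImage (L : Language α) (R : α → β → Prop) : Language β :=
  {u | ∃ v ∈ L, List.Forall₂ R v u}

namespace DFA

def relImage (M : DFA α σ) (R : α → β → Prop) : NFA β σ where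
  step q b := M.step q '' {a | R a b}
  start := {M.start}
  accept := M.accept

theorem mem_evalFrom_relImage (M : DFA α σ) (R : α → β → Prop) (S : Set σ) (u : List β)
    (q' : σ) :
    q' ∈ (M.relImage R).evalFrom S u ↔
      ∃ q ∈ S, ∃ v, List.Forall₂ R v u ∧ M.evalFrom q v = q' := by
  induction u generalizing S with
  | nil => simp
  | cons b u ih =>
    rw [NFA.evalFrom_cons, ih]
    simp only [NFA.mem_stepSet, relImage, List.forall₂_cons_right_iff]
    aesop

theorem relImage_accepts (M : DFA α σ) (R : α → β → Prop) :
    (M.relImage R).accepts = M.accepts.relImage R := by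
  ext u
  simp only [NFA.mem_accepts, mem_evalFrom_relImage]
  constructor
  · rintro ⟨_, hacc, _, rfl, v, hvu, rfl⟩
    exact ⟨v, hacc, hvu⟩
  · rintro ⟨v, hv, hvu⟩
    exact ⟨_, hv, _, rfl, v, hvu, rfl⟩

end DFA

theorem Language.IsRegular.relImage {L : Language α} (hL : L.IsRegular)
    (R : α → β → Prop) : (L.relImage R).IsRegular := by
  obtain ⟨σ, _, M, rfl⟩ := hL
  exact ⟨Set σ, inferInstance, (M.relImage R).toDFA, by simp [DFA.relImage_accepts]⟩

end RelImage

section TupleEncodings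

variable {ι : Type*}

def EncodesTuple (u : List (Finset ι)) (p : ι → Fin u.length) : Prop :=
  ∀ j q, j ∈ u.get q ↔ q = p j

def tupleEncodings (ι : Type*) : Language (Finset ι) :=
  {u | ∃ p, EncodesTuple u p}

theorem mem_tupleEncodings_iff {u : List (Finset ι)} :
    u ∈ tupleEncodings ι ↔ u.Pairwise Disjoint ∧ ∀ j, ∃ s ∈ u, j ∈ s := by
  constructor
  · rintro ⟨p, hp⟩
    refine ⟨List.pairwise_iff_get.mpr fun q₁ q₂ hlt => Finset.disjoint_left.mpr fun j h₁ h₂ => ?_,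
      fun j => ⟨u.get (p j), List.get_mem u (p j), (hp j (p j)).mpr rfl⟩⟩
    exact hlt.ne (((hp j q₁).mp h₁).trans ((hp j q₂).mp h₂).symm)
  · rintro ⟨hdisj, hcover⟩
    choose s hs hjs using hcover
    choose p hp using fun j => List.mem_iff_get.mp (hs j)
    refine ⟨p, fun j q => ⟨fun hq => ?_, fun hq => hq ▸ (hp j).symm ▸ hjs j⟩⟩
    by_contra hne
    have hj : j ∈ u.get (p j) := (hp j).symm ▸ hjs j
    rcases lt_or_gt_of_ne hne with hlt | hlt
    · exact Finset.disjoint_left.mp (List.pairwise_iff_get.mp hdisj _ _ hlt) hq hj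
    · exact Finset.disjoint_left.mp (List.pairwise_iff_get.mp hdisj _ _ hlt) hj hq

variable [DecidableEq ι]

/-- State `some T`: the indices met so far, all in different letters; `none`: an index was met
twice. -/
def tupleEncodingDFA (ι : Type*) [Fintype ι] [DecidableEq ι] :
    DFA (Finset ι) (Option (Finset ι)) where
  step T s := T.bind fun T => if Disjoint T s then some (T ∪ s) else none
  start := some ∅
  accept := {some Finset.univ}

variable [Fintype ι]

theorem tupleEncodingDFA_evalFrom_none (u : List (Finset ι)) :
    (tupleEncodingDFA ι).evalFrom none u = none := by
  induction u with
  | nil => rfl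
  | cons s u ih => exact ih

theorem mem_tupleEncodingDFA_acceptsFrom_some {T : Finset ι} {u : List (Finset ι)} :
    u ∈ (tupleEncodingDFA ι).acceptsFrom (some T) ↔
      (∀ s ∈ u, Disjoint T s) ∧ u.Pairwise Disjoint ∧ ∀ j ∉ T, ∃ s ∈ u, j ∈ s := by
  induction u generalizing T with
  | nil => simp [DFA.mem_acceptsFrom, tupleEncodingDFA, Finset.eq_univ_iff_forall]
  | cons s u ih =>
    rw [DFA.mem_acceptsFrom, DFA.evalFrom_cons, ← DFA.mem_acceptsFrom]
    by_cases hTs : Disjoint T s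
    · simp only [tupleEncodingDFA, Option.bind_some, hTs, if_true] at ih ⊢
      rw [ih]
      simp only [Finset.disjoint_union_left, List.pairwise_cons, List.mem_cons, forall_eq_or_imp,
        exists_eq_or_imp, Finset.mem_union, not_or]
      grind
    · have hfail : (tupleEncodingDFA ι).step (some T) s = none := by simp [tupleEncodingDFA, hTs]
      rw [hfail, DFA.mem_acceptsFrom, tupleEncodingDFA_evalFrom_none]
      simp [tupleEncodingDFA, hTs]

theorem tupleEncodingDFA_accepts : (tupleEncodingDFA ι).accepts = tupleEncodings ι := by
  ext u
  rw [mem_tupleEncodings_iff]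
  exact mem_tupleEncodingDFA_acceptsFrom_some.trans (by simp)

theorem isRegular_tupleEncodings : (tupleEncodings ι).IsRegular :=
  Language.isRegular_iff.mpr ⟨_, inferInstance, _, tupleEncodingDFA_accepts⟩

end TupleEncodings

section Ceil

variable {α ι : Type*}

theorem EncodesTuple.forall₂_iff {u : List (Finset ι)} {p : ι → Fin u.length}
    (hp : EncodesTuple u p) {a : ι → α} {v : List α} :
    List.Forall₂ (fun b s => ∀ j ∈ s, a j = b) v u ↔
      v.length = u.length ∧ ∀ j, v[(p j : ℕ)]? = some (a j) := by
  rw [List.forall₂_iff_get]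
  refine and_congr_right fun hlen => ⟨fun h j => ?_, fun h i _ hu j hj => ?_⟩
  · have hpj : (p j : ℕ) < v.length := by rw [hlen]; exact (p j).isLt
    rw [List.getElem?_eq_getElem hpj]
    exact congrArg some (h _ hpj (p j).isLt j ((hp j (p j)).mpr rfl)).symm
  · obtain ⟨_, hva⟩ := List.getElem?_eq_some_iff.mp (h j)
    have hi : i = p j := congrArg Fin.val ((hp j ⟨i, hu⟩).mp hj)
    subst hi
    exact hva.symm

variable {A : Type} {d : ℕ}

def ceilNumPred (L : Set (List A)) (a : Fin d → A) (i : Fin d → ℕ) (n : ℕ) : Prop :=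
  ∃ v ∈ L, v.length = n ∧ ∀ j, v[i j]? = some (a j)

theorem numPredEncoding_ceilNumPred (L : Set (List A)) (a : Fin d → A) :
    NumPredEncoding (ceilNumPred L a) =
      tupleEncodings (Fin d) ⊓
        Language.relImage (L : Language A) (fun b s => ∀ j ∈ s, a j = b) := by
  ext u
  constructor
  · rintro ⟨p, hp, v, hv, hva⟩
    exact ⟨⟨p, hp⟩, v, hv, (EncodesTuple.forall₂_iff hp).mpr hva⟩
  · rintro ⟨⟨p, hp⟩, v, hv, hvu⟩
    exact ⟨p, hp, v, hv, hp.forall₂_iff.mp hvu⟩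

theorem isRegularNumPred_ceilNumPred {L : Set (List A)} (hL : Language.IsRegular (L : Language A))
    (a : Fin d → A) : IsRegularNumPred (ceilNumPred L a) := by
  rw [IsRegularNumPred, numPredEncoding_ceilNumPred]
  exact isRegular_tupleEncodings.inf (hL.relImage _)

theorem mem_ceil_iff {L : Set (List A)} {w : List A} :
    w ∈ ceil A d L ↔
      ∀ i : Fin d → Fin w.length, ceilNumPred L (fun j => w.get (i j)) (fun j => i j) w.length := by
  refine forall_congr' fun i => exists_congr fun v => and_congr_right fun _ => ?_
  refine ⟨fun ⟨hlen, hv⟩ => ⟨hlen, fun j => ?_⟩, fun ⟨hlen, hv⟩ => ⟨hlen, fun j => ?_⟩⟩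
  · show v[(i j : ℕ)]? = some (w.get (i j))
    rw [← hv j]
    simp
  · obtain ⟨_, hva⟩ := List.getElem?_eq_some_iff.mp (hv j)
    simpa using hva

end Ceil

theorem ceil_pi1_reg_definable_general (A : Type) (d : ℕ)
    (L : Set (List A)) (hreg : Language.IsRegular (L : Language A)) :
    Pi1RegDefinable A d (ceil A d L) :=
  ⟨ceilNumPred L, isRegularNumPred_ceilNumPred hreg, fun _ => mem_ceil_iff⟩

theorem ceil_pi1_reg_definable (A : Type) [Fintype A] [Nonempty A] (d : ℕ) (hd : 1 ≤ d)
    (L : Set (List A)) (hreg : Language.IsRegular (L : Language A)) :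
    Pi1RegDefinable A d (ceil A d L) :=
  ceil_pi1_reg_definable_general A d L hreg
end

section
/- Fix k ≥ 0 and order the type Fin k → Bool pointwise (with false < true). Let C be the smallest collection of subsets of Fin k → Bool such that (i) every upper set belongs to C, and (ii) whenever U is an upper set and S ∈ C, the difference U \ S belongs to C. Then every subset X of Fin k → Bool belongs to C. (Equivalently: every propositional formula is equivalent to an iterated difference of monotone formulas, φ₁ − (φ₂ − (φ₃ − ⋯)).) -/
inductive DiffChain {k : ℕ} : Set (Fin k → Bool) → Prop
  | upper (U : Set (Fin k → Bool)) : IsUpperSet U → DiffChain U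
  | diff (U S : Set (Fin k → Bool)) : IsUpperSet U → DiffChain S → DiffChain (U \ S)

/-!
Every `X` is `U \ (U \ X)` with `U` the upper closure of `X`, and the upper closure of `U \ X`
misses the minimal elements of `X`, so it is strictly smaller than `U`. Induction on the size of
the upper closure then writes `X` as an iterated difference of upper sets.
-/

section UpperClosure

variable {α : Type*} [PartialOrder α] {X : Set α}

theorem notMem_upperClosure_upperClosure_sdiff {m : α} (hm : Minimal (· ∈ X) m) :
    m ∉ upperClosure ((upperClosure X : Set α) \ X) := by
  rintro ⟨s, ⟨⟨x, hx, hxs⟩, hsX⟩, hsm⟩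
  have hms : m ≤ s := (hm.2 hx (hxs.trans hsm)).trans hxs
  exact hsX (le_antisymm hsm hms ▸ hm.1)

theorem upperClosure_upperClosure_sdiff_ssubset (hX : X.Finite) (hne : X.Nonempty) :
    (upperClosure ((upperClosure X : Set α) \ X) : Set α) ⊂ upperClosure X := by
  obtain ⟨m, hm⟩ := hX.exists_minimal hne
  refine ⟨upperClosure_min Set.sdiff_subset (upperClosure X).upper, fun h => ?_⟩
  exact notMem_upperClosure_upperClosure_sdiff hm (h (subset_upperClosure hm.1))

end UpperClosure

theorem every_set_is_diff_chain (k : ℕ) (X : Set (Fin k → Bool)) : DiffChain X := by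
  rcases X.eq_empty_or_nonempty with rfl | hne
  · exact .upper ∅ isUpperSet_empty
  rw [← Set.sdiff_sdiff_cancel_left (subset_upperClosure (s := X))]
  exact .diff _ _ (upperClosure X).upper (every_set_is_diff_chain k _)
termination_by (upperClosure X : Set (Fin k → Bool)).ncard
decreasing_by
  exact Set.ncard_lt_ncard (upperClosure_upperClosure_sdiff_ssubset X.toFinite hne) (Set.toFinite _)
end

section
/- Let A be a finite nonempty alphabet. If L₁ is Π₁_{d₁}[N]-definable and L₂ is Π₁_{d₂}[N]-definable, then L₁ ∩ L₂ and L₁ ∪ L₂ are each Π₁_d[N]-definable for some d ≥ 1 (indeed one may take d = d₁ + d₂). -/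
theorem pi1N_inter_union (A : Type) [Fintype A] [Nonempty A] (d₁ d₂ : ℕ)
    (h₁ : 1 ≤ d₁) (h₂ : 1 ≤ d₂) (L₁ L₂ : Set (List A))
    (hL₁ : Pi1NDefinable A d₁ L₁) (hL₂ : Pi1NDefinable A d₂ L₂) :
    Pi1NDefinable A (d₁ + d₂) (L₁ ∩ L₂) ∧ Pi1NDefinable A (d₁ + d₂) (L₁ ∪ L₂) := by
  classical
  obtain ⟨N₁, hN₁⟩ := hL₁
  obtain ⟨N₂, hN₂⟩ := hL₂
  constructor
  · refine ⟨fun a i n =>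
      N₁ (fun j => a (Fin.castAdd d₂ j)) (fun j => i (Fin.castAdd d₂ j)) n ∧
      N₂ (fun j => a (Fin.natAdd d₁ j)) (fun j => i (Fin.natAdd d₁ j)) n, fun w => ?_⟩
    constructor
    · rintro ⟨hw1, hw2⟩ i
      exact ⟨(hN₁ w).1 hw1 _, (hN₂ w).1 hw2 _⟩
    · intro h
      by_cases hn : w.length = 0
      · refine ⟨(hN₁ w).2 (fun i => ?_), (hN₂ w).2 (fun i => ?_)⟩
        · exact absurd (i ⟨0, h₁⟩).isLt (by omega)
        · exact absurd (i ⟨0, h₂⟩).isLt (by omega)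
      · have j0 : Fin w.length := ⟨0, Nat.pos_of_ne_zero hn⟩
        refine ⟨(hN₁ w).2 (fun i₁ => ?_), (hN₂ w).2 (fun i₂ => ?_)⟩
        · have := (h (Fin.addCases i₁ fun _ => j0)).1
          simpa using this
        · have := (h (Fin.addCases (fun _ => j0) i₂)).2
          simpa using this
  · refine ⟨fun a i n =>
      N₁ (fun j => a (Fin.castAdd d₂ j)) (fun j => i (Fin.castAdd d₂ j)) n ∨
      N₂ (fun j => a (Fin.natAdd d₁ j)) (fun j => i (Fin.natAdd d₁ j)) n, fun w => ?_⟩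
    constructor
    · rintro (hw | hw) i
      · exact Or.inl ((hN₁ w).1 hw _)
      · exact Or.inr ((hN₂ w).1 hw _)
    · intro h
      by_cases hw1 : w ∈ L₁
      · exact Or.inl hw1
      · right
        refine (hN₂ w).2 (fun i₂ => ?_)
        have hne := (hN₁ w).not.1 hw1
        push_neg at hne
        obtain ⟨i₁, hi₁⟩ := hne
        have := h (Fin.addCases i₁ i₂)
        simp only [Fin.addCases_left, Fin.addCases_right] at this
        exact this.resolve_left hi₁
end

section
/- Let A be a finite nonempty alphabet, d ≥ 1, and k ≥ 2. Suppose L = M₁ \ (M₂ \ (M₃ \ ⋯ \ M_k)⋯) is an iterated difference of k languages M₁, …, M_k over A, each of which is Π₁_d[N]-definable. Then ceil_d L \ L can be written as an iterated difference M'₁ \ (M'₂ \ ⋯ \ M'_{k−1})⋯) of k−1 languages, each of which is Π₁_d[N]-definable. -/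
def iterDiff {α : Type*} : List (Set α) → Set α
  | [] => ∅
  | s :: rest => s \ iterDiff rest

variable {A : Type*} {d : ℕ}

theorem Pi1NDefinable.inter {L₁ L₂ : Set (List A)} (h₁ : Pi1NDefinable A d L₁)
    (h₂ : Pi1NDefinable A d L₂) : Pi1NDefinable A d (L₁ ∩ L₂) := by
  obtain ⟨N₁, hN₁⟩ := h₁
  obtain ⟨N₂, hN₂⟩ := h₂
  exact ⟨fun a p n => N₁ a p n ∧ N₂ a p n, fun w => by simp [hN₁ w, hN₂ w, forall_and]⟩

theorem pi1NDefinable_ceil (L : Set (List A)) : Pi1NDefinable A d (ceil A d L) := by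
  refine ⟨fun a p n => ∃ v ∈ L, ∃ h : v.length = n,
      ∀ j, ∃ hp : p j < v.length, v.get ⟨p j, hp⟩ = a j, fun w => ⟨?_, ?_⟩⟩
  · intro hw i
    obtain ⟨v, hv, h, hget⟩ := hw i
    exact ⟨v, hv, h, fun j => ⟨h.symm ▸ (i j).isLt, hget j⟩⟩
  · intro hw i
    obtain ⟨v, hv, h, hget⟩ := hw i
    exact ⟨v, hv, h, fun j => (hget j).2⟩

theorem ceil_mono {L₁ L₂ : Set (List A)} (h : L₁ ⊆ L₂) : ceil A d L₁ ⊆ ceil A d L₂ := by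
  intro w hw i
  obtain ⟨v, hv, hlen, hget⟩ := hw i
  exact ⟨v, h hv, hlen, hget⟩

theorem Pi1NDefinable.ceil_subset {L : Set (List A)} (h : Pi1NDefinable A d L) :
    ceil A d L ⊆ L := by
  obtain ⟨N, hN⟩ := h
  intro w hw
  rw [hN]
  intro i
  obtain ⟨v, hv, hlen, hget⟩ := hw i
  simpa only [hget, Fin.val_cast, hlen] using (hN v).mp hv (fun j => Fin.cast hlen.symm (i j))

theorem Pi1NDefinable.ceil_subset_of_subset {L M : Set (List A)} (hM : Pi1NDefinable A d M)
    (h : L ⊆ M) : ceil A d L ⊆ M :=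
  (ceil_mono h).trans hM.ceil_subset

theorem diff_iterDiff_cons_of_subset {α : Type*} {C m : Set α} (rest : List (Set α))
    (h : C ⊆ m) : C \ iterDiff (m :: rest) = C ∩ iterDiff rest := by
  rw [iterDiff, Set.sdiff_sdiff_right, Set.sdiff_eq_empty.mpr h, Set.empty_union]

theorem ceil_diff_shorter_chain_general (A : Type) (d k : ℕ)
    (hk : 2 ≤ k) (M : List (Set (List A))) (hlen : M.length = k)
    (hdef : ∀ s ∈ M, Pi1NDefinable A d s) (L : Set (List A)) (hL : L = iterDiff M) :
    ∃ M' : List (Set (List A)), M'.length = k - 1 ∧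
      (∀ s ∈ M', Pi1NDefinable A d s) ∧ ceil A d L \ L = iterDiff M' := by
  obtain ⟨m₁, m₂, t, rfl⟩ : ∃ m₁ m₂ t, M = m₁ :: m₂ :: t := by
    rcases M with _ | ⟨m₁, _ | ⟨m₂, t⟩⟩
    · simp only [List.length_nil] at hlen; omega
    · simp only [List.length_cons, List.length_nil] at hlen; omega
    · exact ⟨m₁, m₂, t, rfl⟩
  simp only [List.forall_mem_cons] at hdef
  obtain ⟨hm₁, hm₂, ht⟩ := hdef
  have hceil : ceil A d L ⊆ m₁ := hm₁.ceil_subset_of_subset (hL ▸ Set.sdiff_subset)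
  refine ⟨(ceil A d L ∩ m₂) :: t, by simp [← hlen], ?_, ?_⟩
  · exact List.forall_mem_cons.mpr ⟨(pi1NDefinable_ceil L).inter hm₂, ht⟩
  · conv_lhs => arg 2; rw [hL]
    rw [diff_iterDiff_cons_of_subset _ hceil, iterDiff, iterDiff, Set.inter_sdiff_assoc]

theorem ceil_diff_shorter_chain (A : Type) [Fintype A] [Nonempty A] (d k : ℕ)
    (hd : 1 ≤ d) (hk : 2 ≤ k) (M : List (Set (List A))) (hlen : M.length = k)
    (hdef : ∀ s ∈ M, Pi1NDefinable A d s) (L : Set (List A)) (hL : L = iterDiff M) :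
    ∃ M' : List (Set (List A)), M'.length = k - 1 ∧
      (∀ s ∈ M', Pi1NDefinable A d s) ∧ ceil A d L \ L = iterDiff M' :=
  ceil_diff_shorter_chain_general A d k hk M hlen hdef L hL
end
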